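/- For every integer d ≥ 2, the map π_c : SC_d(2,0;c) → S^{d-1} sending ((x,r),(y,s)) to (x − y)/‖x − y‖ is a well-defined continuous map and a homotopy equivalence; moreover π_c(τ(c)) = −π_c(c) for every c ∈ SC_d(2,0;c), where τ swaps the two balls. In particular the configuration space of two nonoverlapping balls in the closed unit ball of ℝ^d is homotopy equivalent to the sphere S^{d-1}. -/

import Mathlib

noncomputable section

/-- The configuration space `SC_d(2,0;c)` of two nonoverlapping balls in the closed
unit ball of `ℝ^d`. -/
def SC20c (d : ℕ) :
    Set ((EuclideanSpace ℝ (Fin d) × ℝ) × (EuclideanSpace ℝ (Fin d) × ℝ)) :=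
  {c | 0 < c.1.2 ∧ 0 < c.2.2 ∧
       ‖c.1.1‖ + c.1.2 ≤ 1 ∧ ‖c.2.1‖ + c.2.2 ≤ 1 ∧
       ‖c.1.1 - c.2.1‖ ≥ c.1.2 + c.2.2}

/-- The unit sphere `S^{d-1} = {z ∈ ℝ^d : ‖z‖ = 1}`. -/
def unitSphere (d : ℕ) : Set (EuclideanSpace ℝ (Fin d)) := {z | ‖z‖ = 1}

/-- The raw formula of the projection `π_c`, sending `((x,r),(y,s))` to `(x−y)/‖x−y‖`. -/
def rawPi (d : ℕ) :
    (EuclideanSpace ℝ (Fin d) × ℝ) × (EuclideanSpace ℝ (Fin d) × ℝ) →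
      EuclideanSpace ℝ (Fin d) :=
  fun c => ‖c.1.1 - c.2.1‖⁻¹ • (c.1.1 - c.2.1)

/-!
The direction map `rawPi` has the section `standardConfig`, which places two balls of radius `1/4`
at `±z/4`. Every configuration `c` is joined to `standardConfig (rawPi c)` by a straight segment
inside `SC20c d`: the constraints `r > 0` and `‖x‖ + r ≤ 1` are convex, and since both endpoints
have centre differences on the same ray, `‖x - y‖` is affine along the segment, so the
separation `‖x - y‖ ≥ r + s` is preserved as well.
-/

open ContinuousMap

section NormedSpace

variable {E : Type*} [NormedAddCommGroup E] [NormedSpace ℝ E]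

theorem convex_setOf_norm_fst_add_snd_le (b : ℝ) : Convex ℝ {p : E × ℝ | ‖p.1‖ + p.2 ≤ b} := by
  have h : ConvexOn ℝ Set.univ (fun p : E × ℝ => ‖p.1‖ + p.2) :=
    ((convexOn_norm convex_univ).comp_linearMap (LinearMap.fst ℝ E ℝ)).add
      ((LinearMap.snd ℝ E ℝ).convexOn convex_univ)
  simpa using h.convex_le b

theorem SameRay.norm_smul_add_smul {v w : E} (h : SameRay ℝ v w) {a b : ℝ} (ha : 0 ≤ a)
    (hb : 0 ≤ b) : ‖a • v + b • w‖ = a * ‖v‖ + b * ‖w‖ := by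
  rw [((h.nonneg_smul_left ha).nonneg_smul_right hb).norm_add, norm_smul_of_nonneg ha,
    norm_smul_of_nonneg hb]

def standardConfig (z : E) : (E × ℝ) × (E × ℝ) := (((4⁻¹ : ℝ) • z, 4⁻¹), (-((4⁻¹ : ℝ) • z), 4⁻¹))

theorem standardConfig_sub (z : E) :
    (standardConfig z).1.1 - (standardConfig z).2.1 = (2⁻¹ : ℝ) • z := by
  simp only [standardConfig]; module

@[fun_prop]
theorem continuous_standardConfig : Continuous (standardConfig : E → (E × ℝ) × (E × ℝ)) := by
  unfold standardConfig; fun_prop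

end NormedSpace

variable {d : ℕ} {c : (EuclideanSpace ℝ (Fin d) × ℝ) × (EuclideanSpace ℝ (Fin d) × ℝ)}

theorem norm_sub_pos_of_mem_SC20c (hc : c ∈ SC20c d) : 0 < ‖c.1.1 - c.2.1‖ :=
  (add_pos hc.1 hc.2.1).trans_le hc.2.2.2.2

theorem rawPi_mem_unitSphere (hc : c ∈ SC20c d) : rawPi d c ∈ unitSphere d := by
  simp only [rawPi, unitSphere, Set.mem_ofPred_eq, norm_smul, norm_inv, norm_norm]
  exact inv_mul_cancel₀ (norm_sub_pos_of_mem_SC20c hc).ne'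

theorem continuous_rawPi_restrict : Continuous (fun c : SC20c d => rawPi d c.1) := by
  have hsub : Continuous fun c : SC20c d => c.1.1.1 - c.1.2.1 := by fun_prop
  exact (hsub.norm.inv₀ fun c => (norm_sub_pos_of_mem_SC20c c.2).ne').smul hsub

theorem rawPi_swap : rawPi d c.swap = -rawPi d c := by
  simp only [rawPi, Prod.fst_swap, Prod.snd_swap, ← neg_sub c.1.1, norm_neg, smul_neg]

theorem swap_mem_SC20c (hc : c ∈ SC20c d) : c.swap ∈ SC20c d := by
  obtain ⟨hr, hs, hx, hy, hsep⟩ := hc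
  exact ⟨hs, hr, hy, hx, by rw [Prod.fst_swap, Prod.snd_swap, norm_sub_rev, add_comm]; exact hsep⟩

theorem standardConfig_mem_SC20c {z : EuclideanSpace ℝ (Fin d)} (hz : z ∈ unitSphere d) :
    standardConfig z ∈ SC20c d := by
  have hz : ‖z‖ = 1 := hz
  refine ⟨by norm_num [standardConfig], by norm_num [standardConfig], ?_, ?_, ?_⟩
  · norm_num [standardConfig, norm_smul, hz]
  · norm_num [standardConfig, norm_smul, hz]
  · rw [standardConfig_sub]; norm_num [standardConfig, norm_smul, hz]

theorem rawPi_standardConfig {z : EuclideanSpace ℝ (Fin d)} (hz : z ∈ unitSphere d) :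
    rawPi d (standardConfig z) = z := by
  have hz : ‖z‖ = 1 := hz
  rw [rawPi, standardConfig_sub, norm_smul, hz, smul_smul]
  norm_num

theorem sameRay_standardConfig_rawPi :
    SameRay ℝ ((standardConfig (rawPi d c)).1.1 - (standardConfig (rawPi d c)).2.1)
      (c.1.1 - c.2.1) := by
  rw [standardConfig_sub, rawPi, smul_smul]
  exact SameRay.sameRay_nonneg_smul_left _ (by positivity)

theorem segment_mem_SC20c_of_sameRay
    {a b : (EuclideanSpace ℝ (Fin d) × ℝ) × (EuclideanSpace ℝ (Fin d) × ℝ)}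
    (ha : a ∈ SC20c d) (hb : b ∈ SC20c d) (hab : SameRay ℝ (a.1.1 - a.2.1) (b.1.1 - b.2.1))
    {t : ℝ} (ht₀ : 0 ≤ t) (ht₁ : t ≤ 1) : (1 - t) • a + t • b ∈ SC20c d := by
  obtain ⟨har, has, hax, hay, hasep⟩ := ha
  obtain ⟨hbr, hbs, hbx, hby, hbsep⟩ := hb
  have hs₀ : 0 ≤ 1 - t := sub_nonneg.2 ht₁
  have hs₁ : (1 - t) + t = 1 := sub_add_cancel 1 t
  refine ⟨convex_Ioi (0 : ℝ) har hbr hs₀ ht₀ hs₁, convex_Ioi (0 : ℝ) has hbs hs₀ ht₀ hs₁,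
    convex_setOf_norm_fst_add_snd_le 1 hax hbx hs₀ ht₀ hs₁,
    convex_setOf_norm_fst_add_snd_le 1 hay hby hs₀ ht₀ hs₁, ?_⟩
  have hdiff : ((1 - t) • a + t • b).1.1 - ((1 - t) • a + t • b).2.1
      = (1 - t) • (a.1.1 - a.2.1) + t • (b.1.1 - b.2.1) := by
    simp only [Prod.fst_add, Prod.snd_add, Prod.smul_fst, Prod.smul_snd]; module
  rw [hdiff, hab.norm_smul_add_smul hs₀ ht₀]
  simp only [Prod.fst_add, Prod.snd_add, Prod.smul_fst, Prod.smul_snd, smul_eq_mul]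
  linarith [mul_le_mul_of_nonneg_left hasep hs₀, mul_le_mul_of_nonneg_left hbsep ht₀]

namespace SC20c

variable (d)

def toSphere : C(SC20c d, unitSphere d) :=
  ⟨fun c => ⟨rawPi d c, rawPi_mem_unitSphere c.2⟩, continuous_rawPi_restrict.subtype_mk _⟩

def ofSphere : C(unitSphere d, SC20c d) :=
  ⟨fun z => ⟨standardConfig z, standardConfig_mem_SC20c z.2⟩, by fun_prop⟩

theorem toSphere_comp_ofSphere : (toSphere d).comp (ofSphere d) = .id _ := by
  ext1 z
  exact Subtype.ext (rawPi_standardConfig z.2)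

def homotopyOfSphereCompToSphere : ((ofSphere d).comp (toSphere d)).Homotopy (.id _) where
  toFun p := ⟨(1 - (p.1 : ℝ)) • standardConfig (rawPi d p.2) + (p.1 : ℝ) • (p.2 : _),
    segment_mem_SC20c_of_sameRay (standardConfig_mem_SC20c (rawPi_mem_unitSphere p.2.2)) p.2.2
      sameRay_standardConfig_rawPi p.1.2.1 p.1.2.2⟩
  continuous_toFun := by
    refine Continuous.subtype_mk ?_ _
    have : Continuous fun p : unitInterval × SC20c d => rawPi d p.2 :=
      continuous_rawPi_restrict.comp continuous_snd
    fun_prop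
  map_zero_left c := by ext1; simp [ofSphere, toSphere]
  map_one_left c := by ext1; simp

def homotopyEquivSphere : SC20c d ≃ₕ unitSphere d where
  toFun := toSphere d
  invFun := ofSphere d
  left_inv := ⟨homotopyOfSphereCompToSphere d⟩
  right_inv := toSphere_comp_ofSphere d ▸ .refl _

end SC20c

theorem swissCheese_two_balls_closed_homotopy_equiv_sphere_general (d : ℕ) :
    (∀ c ∈ SC20c d, rawPi d c ∈ unitSphere d) ∧
    Continuous (fun c : SC20c d => rawPi d c.1) ∧
    (∃ h : ContinuousMap.HomotopyEquiv (SC20c d) (unitSphere d),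
        ∀ c : SC20c d, (h.toFun c : EuclideanSpace ℝ (Fin d)) = rawPi d c.1) ∧
    (∀ c ∈ SC20c d, Prod.swap c ∈ SC20c d ∧ rawPi d (Prod.swap c) = - rawPi d c) :=
  ⟨fun _ => rawPi_mem_unitSphere, continuous_rawPi_restrict,
    ⟨SC20c.homotopyEquivSphere d, fun _ => rfl⟩, fun _ hc => ⟨swap_mem_SC20c hc, rawPi_swap⟩⟩

/-- For every integer `d ≥ 2`, the map
`π_c : SC_d(2,0;c) → S^{d-1}`, `((x,r),(y,s)) ↦ (x−y)/‖x−y‖`, is well defined and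
continuous, it is a homotopy equivalence, and `π_c(τ(c)) = −π_c(c)` where `τ` swaps the
two balls.  In particular `SC_d(2,0;c)` is homotopy equivalent to `S^{d-1}`. -/
theorem swissCheese_two_balls_closed_homotopy_equiv_sphere (d : ℕ) (hd : 2 ≤ d) :
    (∀ c ∈ SC20c d, rawPi d c ∈ unitSphere d) ∧
    Continuous (fun c : SC20c d => rawPi d c.1) ∧
    (∃ h : ContinuousMap.HomotopyEquiv (SC20c d) (unitSphere d),
        ∀ c : SC20c d, (h.toFun c : EuclideanSpace ℝ (Fin d)) = rawPi d c.1) ∧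
    (∀ c ∈ SC20c d, Prod.swap c ∈ SC20c d ∧ rawPi d (Prod.swap c) = - rawPi d c) :=
  swissCheese_two_balls_closed_homotopy_equiv_sphere_general d
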